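/- Fix p, q ∈ [0,1] with p + q ≤ 1, r = 1 - p - q, p > 0, and let μ be a translation-invariant probability measure on {0,?,1}^ℤ that is stationary for the envelope PCA F̂_{p,q}. If μ(000?) = 0, then μ(⟨***⟩) = 0 and hence μ(?) = 0. (Here μ(000?) is the probability that four consecutive coordinates read (0,0,0,?) and μ(⟨***⟩) is the probability that three consecutive coordinates lie in {0,?}³ \ {(0,0,0)}.) -/

import Mathlib

/-!
Stationarity writes `μ(000?)` as the `μ`-expectation of the product of the four single-site
update probabilities. The three factors producing `0` are each at least `p`, and the factor
producing `?` equals `r = 1 - p - q` on `⟨***⟩` (read at site 3) and vanishes elsewhere, so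
`μ(000?) ≥ p³ r μ(⟨***⟩)` by translation invariance; in the same way `μ(?) = r μ(⟨***⟩)`.
If `r > 0` both claims follow. If `r = 0` then `μ(?) = 0`, and `⟨***⟩` is covered by the three
translates of the event `?`.
-/

open MeasureTheory

inductive PSym : Type
  | zero : PSym
  | quest : PSym
  | one : PSym
deriving DecidableEq

instance : Fintype PSym :=
  ⟨{PSym.zero, PSym.quest, PSym.one}, fun x => by cases x <;> simp⟩

instance : MeasurableSpace PSym := ⊤

abbrev Config : Type := ℤ → PSym

open PSym

/-- the symbol lies in `{0, ?}` -/
def lowQ (a : PSym) : Prop := a = PSym.zero ∨ a = PSym.quest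

instance : DecidablePred lowQ := fun a => by unfold lowQ; infer_instance

/-- the window `(η k, η (k+1))` lies in `{0,?}² \ {(0,0)}` -/
def star2 (η : Config) (k : ℤ) : Prop :=
  lowQ (η k) ∧ lowQ (η (k + 1)) ∧ ¬(η k = PSym.zero ∧ η (k + 1) = PSym.zero)

/-- the window `(η k, η (k+1), η (k+2))` lies in `{0,?}³ \ {(0,0,0)}` -/
def star3 (η : Config) (k : ℤ) : Prop :=
  lowQ (η k) ∧ lowQ (η (k + 1)) ∧ lowQ (η (k + 2)) ∧
    ¬(η k = PSym.zero ∧ η (k + 1) = PSym.zero ∧ η (k + 2) = PSym.zero)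

/-- translation by `k` -/
def shiftBy (k : ℤ) (η : Config) : Config := fun n => η (n + k)

/-- reflection -/
def reflect (η : Config) : Config := fun n => η (-n)

/-- the single-site stochastic update rule of the envelope PCA `F̂_{p,q}`:
`phi p q a b c d` is the probability that the output symbol is `d` when the
neighbourhood reads `(a, b, c)`. -/
noncomputable def phi (p q : ℝ) (a b c d : PSym) : ℝ :=
  if a = PSym.zero ∧ b = PSym.zero ∧ c = PSym.zero then
    (if d = PSym.zero then p else if d = PSym.one then 1 - p else 0)
  else if lowQ a ∧ lowQ b ∧ lowQ c then
    (if d = PSym.zero then p else if d = PSym.one then q else 1 - p - q)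
  else
    (if d = PSym.zero then 1 - q else if d = PSym.one then q else 0)

/-- `ν` is the pushforward of `μ` under the envelope PCA: the `ν`-probability of any
finite cylinder word is obtained by integrating, against `μ`, the product of the
single-site update probabilities (the sites being updated independently). -/
def IsPushforward (p q : ℝ) (μ ν : Measure Config) : Prop :=
  ∀ (x : ℤ) (m : ℕ) (w : Fin m → PSym),
    (ν {η | ∀ i : Fin m, η (x + ((i : ℕ) : ℤ)) = w i}).toReal =
      ∫ η, (∏ i : Fin m,
        phi p q (η (x + ((i : ℕ) : ℤ))) (η (x + ((i : ℕ) : ℤ) + 1))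
          (η (x + ((i : ℕ) : ℤ) + 2)) (w i)) ∂μ

instance : MeasurableSingletonClass PSym := ⟨fun _ => MeasurableSpace.measurableSet_top⟩

lemma measurable_window {β : Type*} [MeasurableSpace β] (f : PSym → PSym → PSym → β)
    (a b c : ℤ) : Measurable fun η : Config => f (η a) (η b) (η c) :=
  (measurable_of_countable fun t : PSym × PSym × PSym => f t.1 t.2.1 t.2.2).comp
    (f := fun η : Config => (η a, η b, η c))
    ((measurable_pi_apply a).prodMk ((measurable_pi_apply b).prodMk (measurable_pi_apply c)))

lemma measurableSet_star3 (k : ℤ) : MeasurableSet {η : Config | star3 η k} :=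
  measurableSet_setOfPred.2 <| measurable_window
    (fun a b c => lowQ a ∧ lowQ b ∧ lowQ c ∧ ¬(a = zero ∧ b = zero ∧ c = zero)) k (k + 1) (k + 2)

lemma measurable_shiftBy (k : ℤ) : Measurable (shiftBy k) :=
  measurable_pi_lambda _ fun n => measurable_pi_apply (n + k)

lemma star3_shiftBy (η : Config) (j k : ℤ) : star3 (shiftBy k η) j ↔ star3 η (j + k) := by
  simp only [star3, shiftBy, add_right_comm _ _ k]

lemma eq_quest_of_star3 (η : Config) (k : ℤ) (h : star3 η k) :
    η k = quest ∨ η (k + 1) = quest ∨ η (k + 2) = quest := by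
  unfold star3 lowQ at h; tauto

section phi
variable {p q : ℝ}

lemma phi_nonneg (hp : 0 ≤ p) (hq : 0 ≤ q) (hpq : p + q ≤ 1) (a b c d : PSym) :
    0 ≤ phi p q a b c d := by
  unfold phi; split_ifs <;> linarith

lemma phi_le_one (hp : 0 ≤ p) (hq : 0 ≤ q) (hpq : p + q ≤ 1) (a b c d : PSym) :
    phi p q a b c d ≤ 1 := by
  unfold phi; split_ifs <;> linarith

lemma le_phi_zero (hpq : p + q ≤ 1) (a b c : PSym) : p ≤ phi p q a b c zero := by
  simp only [phi]
  split_ifs <;> linarith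

lemma phi_quest (η : Config) (k : ℤ) :
    phi p q (η k) (η (k + 1)) (η (k + 2)) quest =
      {η | star3 η k}.indicator (fun _ => 1 - p - q) η := by
  unfold phi; simp only [Set.indicator, Set.mem_ofPred_eq, star3]; split_ifs <;> simp_all [lowQ]

end phi

noncomputable def cylinderWeight (p q : ℝ) (x : ℤ) {m : ℕ} (w : Fin m → PSym) (η : Config) : ℝ :=
  ∏ i : Fin m, phi p q (η (x + (i : ℕ))) (η (x + (i : ℕ) + 1)) (η (x + (i : ℕ) + 2)) (w i)

section pushforward
variable {p q : ℝ} {μ ν : Measure Config}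

lemma integrable_cylinderWeight [IsFiniteMeasure μ] (hp : 0 ≤ p) (hq : 0 ≤ q) (hpq : p + q ≤ 1)
    (x : ℤ) {m : ℕ} (w : Fin m → PSym) : Integrable (cylinderWeight p q x w) μ := by
  have hmeas : Measurable (cylinderWeight p q x w) :=
    Finset.measurable_prod _ fun i _ => measurable_window (fun a b c => phi p q a b c (w i)) _ _ _
  refine .of_bound hmeas.aestronglyMeasurable 1 (ae_of_all _ fun η => ?_)
  rw [cylinderWeight, Real.norm_of_nonneg (Finset.prod_nonneg fun i _ => phi_nonneg hp hq hpq ..)]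
  exact Finset.prod_le_one (fun i _ => phi_nonneg hp hq hpq ..) fun i _ => phi_le_one hp hq hpq ..

lemma IsPushforward.measureReal_cylinder (h : IsPushforward p q μ ν) (x : ℤ) {m : ℕ}
    (w : Fin m → PSym) :
    ν.real {η | ∀ i : Fin m, η (x + (i : ℕ)) = w i} = ∫ η, cylinderWeight p q x w η ∂μ :=
  h x m w

lemma IsPushforward.measureReal_quest (h : IsPushforward p q μ ν) :
    ν.real {η | η 0 = quest} = (1 - p - q) * μ.real {η | star3 η 0} := by
  have key := h.measureReal_cylinder 0 ![quest]
  have hw : cylinderWeight p q 0 ![quest] = {η | star3 η 0}.indicator fun _ => 1 - p - q := by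
    ext η; simpa [cylinderWeight] using phi_quest η 0
  simp only [Fin.forall_fin_one] at key
  rw [hw, integral_indicator_const _ (measurableSet_star3 0)] at key
  simpa [mul_comm] using key

lemma indicator_star3_le_cylinderWeight (hp : 0 ≤ p) (hpq : p + q ≤ 1) (η : Config) :
    {η | star3 η 3}.indicator (fun _ => p ^ 3 * (1 - p - q)) η ≤
      cylinderWeight p q 0 ![zero, zero, zero, quest] η := by
  have hw : cylinderWeight p q 0 ![zero, zero, zero, quest] η =
      phi p q (η 0) (η 1) (η 2) zero * phi p q (η 1) (η 2) (η 3) zero *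
        phi p q (η 2) (η 3) (η 4) zero * phi p q (η 3) (η 4) (η 5) quest := by
    simp [cylinderWeight, Fin.prod_univ_four]
  have h3 : phi p q (η 3) (η 4) (η 5) quest =
      {η | star3 η 3}.indicator (fun _ => 1 - p - q) η := by
    simpa using phi_quest (p := p) (q := q) η 3
  rw [hw, h3]
  by_cases hs : η ∈ {η | star3 η 3}
  · have hr : 0 ≤ 1 - p - q := by linarith
    have hφ (a b c : PSym) : 0 ≤ phi p q a b c zero := hp.trans (le_phi_zero hpq a b c)
    simp only [Set.indicator_of_mem hs]
    calc p ^ 3 * (1 - p - q) = p * p * p * (1 - p - q) := by ring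
      _ ≤ _ := by
        gcongr <;> first | apply le_phi_zero hpq | apply hφ | apply mul_nonneg <;> apply hφ
  · simp [Set.indicator_of_notMem hs]

lemma IsPushforward.le_measureReal_zero_zero_zero_quest [IsFiniteMeasure μ] (hp : 0 ≤ p)
    (hq : 0 ≤ q) (hpq : p + q ≤ 1) (h : IsPushforward p q μ ν) :
    p ^ 3 * (1 - p - q) * μ.real {η | star3 η 3} ≤
      ν.real {η | η 0 = zero ∧ η 1 = zero ∧ η 2 = zero ∧ η 3 = quest} := by
  have hr : 0 ≤ 1 - p - q := by linarith
  have hcyl : {η : Config | ∀ i : Fin 4, η (0 + (i : ℕ)) = ![zero, zero, zero, quest] i} =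
      {η | η 0 = zero ∧ η 1 = zero ∧ η 2 = zero ∧ η 3 = quest} := by
    ext η; simp [Fin.forall_fin_succ]
  rw [← hcyl, h.measureReal_cylinder, mul_comm, ← smul_eq_mul,
    ← integral_indicator_const _ (measurableSet_star3 3)]
  exact integral_mono_of_nonneg
    (ae_of_all _ fun η => Set.indicator_nonneg (fun _ _ => by positivity) η)
    (integrable_cylinderWeight hp hq hpq _ _)
    (ae_of_all _ (indicator_star3_le_cylinderWeight hp hpq))

end pushforward

section shift
variable {μ : Measure Config}

lemma measure_star3_eq (hμ : ∀ k, MeasurePreserving (shiftBy k) μ μ) (k : ℤ) :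
    μ {η | star3 η k} = μ {η | star3 η 0} := by
  simpa [Set.preimage, star3_shiftBy] using
    (hμ k).measure_preimage (measurableSet_star3 0).nullMeasurableSet

lemma measure_quest_eq (hμ : ∀ k, MeasurePreserving (shiftBy k) μ μ) (k : ℤ) :
    μ {η | η k = quest} = μ {η | η 0 = quest} := by
  simpa [Set.preimage, shiftBy] using
    (hμ k).measure_preimage
      (measurableSet_eq_fun (measurable_pi_apply 0) measurable_const).nullMeasurableSet

lemma measure_star3_eq_zero_of_quest (hμ : ∀ k, MeasurePreserving (shiftBy k) μ μ)
    (h : μ {η | η 0 = quest} = 0) : μ {η | star3 η 0} = 0 := by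
  have hk (k : ℤ) : μ {η | η k = quest} = 0 := (measure_quest_eq hμ k).trans h
  exact measure_mono_null (fun η => eq_quest_of_star3 η 0)
    (measure_union_null (hk 0) (measure_union_null (hk _) (hk _)))

end shift

theorem stmt17_general (p q : ℝ) (hp0 : 0 < p) (hq0 : 0 ≤ q)
    (hpq : p + q ≤ 1)
    (μ : Measure Config) [IsProbabilityMeasure μ]
    (hshift : ∀ k : ℤ, Measure.map (shiftBy k) μ = μ)
    (hstat : IsPushforward p q μ μ)
    (h0 : μ {η | η 0 = zero ∧ η 1 = zero ∧ η 2 = zero ∧ η 3 = quest} = 0) :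
    μ {η | star3 η 0} = 0 ∧ μ {η | η 0 = quest} = 0 := by
  have hμ (k : ℤ) : MeasurePreserving (shiftBy k) μ μ := ⟨measurable_shiftBy k, hshift k⟩
  have hquest := hstat.measureReal_quest
  rcases (show 0 ≤ 1 - p - q by linarith).eq_or_lt with hr | hr
  · have hq : μ {η | η 0 = quest} = 0 := by
      rw [← measureReal_eq_zero_iff, hquest, ← hr, zero_mul]
    exact ⟨measure_star3_eq_zero_of_quest hμ hq, hq⟩
  · have hbound := hstat.le_measureReal_zero_zero_zero_quest hp0.le hq0 hpq
    simp only [measureReal_def, h0, measure_star3_eq hμ 3, ENNReal.toReal_zero] at hbound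
    have hstar : μ.real {η | star3 η 0} = 0 :=
      le_antisymm (nonpos_of_mul_nonpos_right hbound (by positivity)) measureReal_nonneg
    rw [measureReal_eq_zero_iff] at hstar
    refine ⟨hstar, ?_⟩
    rw [← measureReal_eq_zero_iff, hquest, measureReal_def, hstar, ENNReal.toReal_zero, mul_zero]

theorem stmt17 (p q : ℝ) (hp0 : 0 < p) (hp1 : p ≤ 1) (hq0 : 0 ≤ q) (hq1 : q ≤ 1)
    (hpq : p + q ≤ 1)
    (μ : Measure Config) [IsProbabilityMeasure μ]
    (hshift : ∀ k : ℤ, Measure.map (shiftBy k) μ = μ)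
    (hstat : IsPushforward p q μ μ)
    (h0 : μ {η | η 0 = zero ∧ η 1 = zero ∧ η 2 = zero ∧ η 3 = quest} = 0) :
    μ {η | star3 η 0} = 0 ∧ μ {η | η 0 = quest} = 0 :=
  stmt17_general p q hp0 hq0 hpq μ hshift hstat h0
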